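/- arXiv:2605.05414 — 3 statements merged into one kernel-verified Lean document; each statement's English description precedes it below -/
import Mathlib

section
/- Let n be a positive integer and let W be an n×n real symmetric matrix with tr W > 0 (i.e. W lies in the Gårding cone Γ₁⁺). Then the matrix B(W) := (tr W)·((tr W)·Iₙ − W) − σ₂(W)·Iₙ is positive semidefinite. (Up to the positive factor 1/(tr W)², B(W) is the gradient matrix (∂F/∂w_{ij})(W) of the function F(W) = σ₂(W)/σ₁(W).) -/
open Matrix

/-- σ₂ of a matrix: `((tr W)² − tr(W²))/2`. -/
noncomputable def sigma2 {n : ℕ} (W : Matrix (Fin n) (Fin n) ℝ) : ℝ :=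
  ((W.trace) ^ 2 - (W * W).trace) / 2

/-- For a real symmetric `n × n` matrix `W` with `tr W > 0`, the matrix
`B(W) = (tr W)·((tr W)·I − W) − σ₂(W)·I` is positive semidefinite. -/
theorem stmt0 (n : ℕ) (hn : 0 < n) (W : Matrix (Fin n) (Fin n) ℝ)
    (hsymm : W.IsSymm) (htr : 0 < W.trace) :
    (W.trace • (W.trace • (1 : Matrix (Fin n) (Fin n) ℝ) - W)
      - sigma2 W • (1 : Matrix (Fin n) (Fin n) ℝ)).PosSemidef := by
  have hH : W.IsHermitian := by
    rwa [Matrix.IsHermitian, conjTranspose_eq_transpose_of_trivial]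
  classical
  set U : Matrix (Fin n) (Fin n) ℝ := (hH.eigenvectorUnitary : Matrix (Fin n) (Fin n) ℝ) with hU
  set μ : Fin n → ℝ := hH.eigenvalues with hμ
  have hUU : star U * U = 1 := Unitary.coe_star_mul_self hH.eigenvectorUnitary
  have hUU' : U * star U = 1 := Unitary.coe_mul_star_self hH.eigenvectorUnitary
  have hspec : W = U * diagonal μ * star U := by
    have := hH.spectral_theorem
    simpa using this
  -- trace of W is sum of eigenvalues
  have htrW : W.trace = ∑ i, μ i := by
    rw [hspec, trace_mul_cycle, hUU, one_mul, trace_diagonal]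
  -- trace of W*W is sum of squares
  have htrW2 : (W * W).trace = ∑ i, μ i ^ 2 := by
    have : W * W = U * diagonal (fun i => μ i ^ 2) * star U := by
      rw [hspec]
      calc U * diagonal μ * star U * (U * diagonal μ * star U)
          = U * (diagonal μ * (star U * U) * diagonal μ) * star U := by
            noncomm_ring
        _ = U * diagonal (fun i => μ i ^ 2) * star U := by
            rw [hUU, mul_one, diagonal_mul_diagonal]
            congr 1
            ext i
            ring
    rw [this, trace_mul_cycle, hUU, one_mul, trace_diagonal]
  -- express B as conjugated diagonal
  set f : Fin n → ℝ := fun i => W.trace ^ 2 - W.trace * μ i - sigma2 W with hf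
  have hB : (W.trace • (W.trace • (1 : Matrix (Fin n) (Fin n) ℝ) - W)
      - sigma2 W • (1 : Matrix (Fin n) (Fin n) ℝ)) = U * diagonal f * star U := by
    have h1 : (1 : Matrix (Fin n) (Fin n) ℝ) = U * 1 * star U := by
      rw [mul_one, hUU']
    have hdiag : diagonal f
        = (W.trace ^ 2 - sigma2 W) • (1 : Matrix (Fin n) (Fin n) ℝ)
          - W.trace • diagonal μ := by
      ext i j
      by_cases h : i = j
      · subst h
        simp [hf, Matrix.one_apply]
        ring
      · simp [Matrix.diagonal_apply_ne _ h, Matrix.one_apply_ne h]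
    rw [hdiag]
    rw [mul_sub, sub_mul, Matrix.mul_smul, Matrix.mul_smul, Matrix.smul_mul, Matrix.smul_mul,
      mul_one, hUU', ← hspec]
    rw [sub_smul, smul_sub, smul_smul, ← pow_two]
    abel
  rw [hB]
  apply Matrix.PosSemidef.mul_mul_conjTranspose_same _ U
  refine Matrix.posSemidef_diagonal_iff.mpr fun i => ?_
  -- nonnegativity of f i
  have hsum : μ i ^ 2 ≤ ∑ j, μ j ^ 2 :=
    Finset.single_le_sum (fun j _ => sq_nonneg (μ j)) (Finset.mem_univ i)
  have : 2 * f i = (W.trace - μ i) ^ 2 + (∑ j, μ j ^ 2 - μ i ^ 2) := by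
    simp only [hf, sigma2, htrW2]
    ring
  nlinarith [sq_nonneg (W.trace - μ i)]
end

section
/- Let n be a positive integer and let W be an n×n real symmetric matrix with tr W > 0 whose rank is not equal to 1. Then the matrix B(W) := (tr W)·((tr W)·Iₙ − W) − σ₂(W)·Iₙ is positive definite, i.e. ξᵀ B(W) ξ > 0 for every nonzero ξ ∈ ℝⁿ. -/
/-!
Diagonalise `W` with eigenvalues `λᵢ`, so that `τ = tr W = ∑ λᵢ` and `tr (W²) = ∑ λᵢ²`.
Since `B(W) = (τ² − σ₂(W))·I − τ·W`, its eigenvalues are `τ² − σ₂ − τλᵢ`, and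
`2 (τ² − σ₂ − τλᵢ) = (τ − λᵢ)² + ∑_{j ≠ i} λⱼ²`.
This vanishes only if `λᵢ = τ > 0` and all other eigenvalues are zero, i.e. only if `W` has
rank one.
-/

open Matrix

namespace Matrix

open scoped ComplexOrder

variable {n 𝕜 : Type*} [Fintype n] [DecidableEq n] [RCLike 𝕜]

theorem trace_conjStarAlgAut {R : Type*} [CommRing R] [StarRing R] (U : unitaryGroup n R)
    (A : Matrix n n R) : (Unitary.conjStarAlgAut R _ U A).trace = A.trace := by
  rw [Unitary.conjStarAlgAut_apply, trace_mul_cycle, Unitary.coe_star_mul_self, one_mul]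

theorem IsHermitian.trace_mul_self_eq_sum_eigenvalues_sq {A : Matrix n n 𝕜}
    (hA : A.IsHermitian) : (A * A).trace = ∑ i, (hA.eigenvalues i : 𝕜) ^ 2 := by
  conv_lhs => rw [hA.spectral_theorem, ← map_mul, trace_conjStarAlgAut, diagonal_mul_diagonal,
    trace_diagonal]
  simp [sq]

theorem IsHermitian.posDef_smul_one_sub_smul_iff {A : Matrix n n 𝕜} (hA : A.IsHermitian)
    (a b : ℝ) : (a • 1 - b • A).PosDef ↔ ∀ i, 0 < a - b * hA.eigenvalues i := by
  set φ := Unitary.conjStarAlgAut ℝ _ hA.eigenvectorUnitary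
  have hφ : a • 1 - b • A = φ (diagonal fun i ↦ ((a - b * hA.eigenvalues i : ℝ) : 𝕜)) := by
    nth_rw 1 [show A = φ (diagonal (RCLike.ofReal ∘ hA.eigenvalues)) from hA.spectral_theorem]
    rw [← map_one φ, ← map_smul, ← map_smul, ← map_sub]
    congr 1
    ext i j
    by_cases h : i = j <;> simp [h, diagonal_apply_ne, RCLike.real_smul_eq_coe_mul]
  rw [hφ, Unitary.conjStarAlgAut_apply, Unitary.isUnit_coe.posDef_star_right_conjugate_iff,
    posDef_diagonal_iff]
  simp only [RCLike.ofReal_pos]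

end Matrix

theorem two_mul_sum_mul_lt_sq_sum_add_sum_sq {ι : Type*} [Fintype ι] {μ : ι → ℝ}
    (hpos : 0 < ∑ j, μ j) (hcard : Fintype.card {j // μ j ≠ 0} ≠ 1) (i : ι) :
    2 * (∑ j, μ j) * μ i < (∑ j, μ j) ^ 2 + ∑ j, μ j ^ 2 := by
  classical
  set τ := ∑ j, μ j
  set r := ∑ j ∈ Finset.univ.erase i, μ j ^ 2
  have hsplit : ∑ j, μ j ^ 2 = μ i ^ 2 + r := (Finset.add_sum_erase _ _ (Finset.mem_univ i)).symm
  have hr : 0 ≤ r := by positivity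
  by_contra! hle
  obtain ⟨hτ, hr0⟩ := (add_eq_zero_iff_of_nonneg (sq_nonneg (τ - μ i)) hr).mp (by nlinarith)
  have hμi : μ i = τ := by linarith [pow_eq_zero_iff two_ne_zero |>.mp hτ]
  have hzero (j : ι) (hj : j ≠ i) : μ j = 0 :=
    pow_eq_zero_iff two_ne_zero |>.mp <|
      (Finset.sum_eq_zero_iff_of_nonneg fun k _ ↦ sq_nonneg (μ k)).mp hr0 j
        (Finset.mem_erase.mpr ⟨hj, Finset.mem_univ j⟩)
  refine hcard (Fintype.card_eq_one_iff.mpr ⟨⟨i, hμi ▸ hpos.ne'⟩, fun j ↦ ?_⟩)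
  exact Subtype.ext (by_contra fun hj ↦ j.2 (hzero j hj))

theorem stmt1_general (n : ℕ) (W : Matrix (Fin n) (Fin n) ℝ)
    (hsymm : W.IsSymm) (htr : 0 < W.trace) (hrank : W.rank ≠ 1) :
    (W.trace • (W.trace • (1 : Matrix (Fin n) (Fin n) ℝ) - W)
      - sigma2 W • (1 : Matrix (Fin n) (Fin n) ℝ)).PosDef := by
  have hW : W.IsHermitian := isHermitian_iff_isSymm.mpr hsymm
  have htrace : W.trace = ∑ i, hW.eigenvalues i := by simpa using hW.trace_eq_sum_eigenvalues
  have htrace_sq : (W * W).trace = ∑ i, hW.eigenvalues i ^ 2 := by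
    simpa using hW.trace_mul_self_eq_sum_eigenvalues_sq
  have hB : W.trace • (W.trace • (1 : Matrix (Fin n) (Fin n) ℝ) - W) - sigma2 W • 1
      = (W.trace ^ 2 - sigma2 W) • 1 - W.trace • W := by module
  rw [hB, hW.posDef_smul_one_sub_smul_iff]
  intro i
  have hineq := two_mul_sum_mul_lt_sq_sum_add_sum_sq (htrace ▸ htr)
    (hW.rank_eq_card_non_zero_eigs ▸ hrank) i
  rw [sigma2, htrace_sq, htrace]
  linarith

/-- For a real symmetric `n × n` matrix `W` with `tr W > 0` whose rank is not
equal to 1, the matrix `B(W) = (tr W)·((tr W)·I − W) − σ₂(W)·I` is positive definite. -/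
theorem stmt1 (n : ℕ) (hn : 0 < n) (W : Matrix (Fin n) (Fin n) ℝ)
    (hsymm : W.IsSymm) (htr : 0 < W.trace) (hrank : W.rank ≠ 1) :
    (W.trace • (W.trace • (1 : Matrix (Fin n) (Fin n) ℝ) - W)
      - sigma2 W • (1 : Matrix (Fin n) (Fin n) ℝ)).PosDef :=
  stmt1_general n W hsymm htr hrank
end

section
/- Let n be a positive integer, let W be an n×n real symmetric matrix with tr W > 0, and let R be any n×n real symmetric matrix. Then the function g(t) := σ₂(W + tR)/tr(W + tR) is twice differentiable at t = 0 and g''(0) = − tr( ((tr W)·R − (tr R)·W)² ) / (tr W)³. (Since (tr W)R − (tr R)W is symmetric, tr(((tr W)R − (tr R)W)²) = Σ_{i,j} (σ₁(W) r_{ij} − σ₁(R) w_{ij})², so this is exactly the Hessian identity Σ_{i,j,k,l} ∂²(σ₂/σ₁)/∂w_{ij}∂w_{kl} (W) r_{ij} r_{kl} = − Σ_{i,j} (σ₁(W) r_{ij} − σ₁(R) w_{ij})² / σ₁(W)³ evaluated in the direction R.) -/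
open Matrix

/-!
Along the line `t ↦ W + t • R`, the trace is linear and `σ₂` is quadratic in `t`, so
`g(t) = σ₂(W + tR) / tr(W + tR)` is a quotient `(c₀ + c₁ t + c₂ t²) / (a + b t)` with `a = tr W`,
`b = tr R`, `c₀ = σ₂(W)`, `c₁ = tr W tr R − tr(WR)`, `c₂ = σ₂(R)`. Such a quotient has second
derivative `2 (a² c₂ − a b c₁ + b² c₀) / a³` at `0`, and expanding `tr((aR − bW)²)` shows that
this number is `−tr((aR − bW)²) / a³`.
-/

section QuadraticDivLinear

variable {a b c₀ c₁ c₂ : ℝ}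

theorem hasDerivAt_quadratic (t : ℝ) :
    HasDerivAt (fun t => c₀ + c₁ * t + c₂ * t ^ 2) (c₁ + 2 * c₂ * t) t := by
  refine ((((hasDerivAt_id' t).const_mul c₁).const_add c₀).fun_add
    ((hasDerivAt_pow 2 t).const_mul c₂)).congr_deriv ?_
  ring

theorem hasDerivAt_linear (t : ℝ) : HasDerivAt (fun t => a + b * t) b t := by
  simpa using ((hasDerivAt_id' t).const_mul b).const_add a

theorem hasDerivAt_quadratic_div_linear {t : ℝ} (ht : a + b * t ≠ 0) :
    HasDerivAt (fun t => (c₀ + c₁ * t + c₂ * t ^ 2) / (a + b * t))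
      ((a * c₁ - b * c₀ + 2 * a * c₂ * t + b * c₂ * t ^ 2) / (a + b * t) ^ 2) t := by
  refine ((hasDerivAt_quadratic t).fun_div (hasDerivAt_linear t) ht).congr_deriv ?_
  ring

theorem eventually_linear_ne_zero (ha : a ≠ 0) : ∀ᶠ t in nhds (0 : ℝ), a + b * t ≠ 0 :=
  (continuous_const.add (continuous_const.mul continuous_id)).continuousAt.eventually_ne
    (by simpa using ha)

theorem eventually_differentiableAt_quadratic_div_linear (ha : a ≠ 0) :
    ∀ᶠ t in nhds (0 : ℝ),
      DifferentiableAt ℝ (fun t => (c₀ + c₁ * t + c₂ * t ^ 2) / (a + b * t)) t :=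
  (eventually_linear_ne_zero ha).mono fun _ ht =>
    (hasDerivAt_quadratic_div_linear ht).differentiableAt

theorem hasDerivAt_deriv_quadratic_div_linear (ha : a ≠ 0) :
    HasDerivAt (deriv fun t => (c₀ + c₁ * t + c₂ * t ^ 2) / (a + b * t))
      (2 * (a ^ 2 * c₂ - a * b * c₁ + b ^ 2 * c₀) / a ^ 3) 0 := by
  have hderiv : (deriv fun t => (c₀ + c₁ * t + c₂ * t ^ 2) / (a + b * t)) =ᶠ[nhds 0]
      fun t => (a * c₁ - b * c₀ + 2 * a * c₂ * t + b * c₂ * t ^ 2) / (a + b * t) ^ 2 :=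
    (eventually_linear_ne_zero ha).mono fun _ ht => (hasDerivAt_quadratic_div_linear ht).deriv
  refine HasDerivAt.congr_of_eventuallyEq ?_ hderiv
  refine ((hasDerivAt_quadratic 0).fun_div ((hasDerivAt_linear 0).fun_pow 2)
    (by simpa using ha)).congr_deriv ?_
  simp only [mul_zero, add_zero, zero_pow two_ne_zero]
  field_simp
  ring

end QuadraticDivLinear

theorem trace_add_smul {ι : Type*} [Fintype ι] (W R : Matrix ι ι ℝ) (t : ℝ) :
    (W + t • R).trace = W.trace + R.trace * t := by
  simp [trace_add, trace_smul, mul_comm]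

section Sigma2

variable {n : ℕ} (W R : Matrix (Fin n) (Fin n) ℝ)

theorem sigma2_add_smul (t : ℝ) :
    sigma2 (W + t • R) =
      sigma2 W + (W.trace * R.trace - (W * R).trace) * t + sigma2 R * t ^ 2 := by
  simp only [sigma2, add_mul, mul_add, trace_add, trace_smul, smul_mul_assoc, mul_smul_comm,
    smul_eq_mul, trace_mul_comm R W]
  ring

theorem trace_mul_self_trace_smul_sub_trace_smul :
    ((W.trace • R - R.trace • W) * (W.trace • R - R.trace • W)).trace =
      -2 * (W.trace ^ 2 * sigma2 R - W.trace * R.trace * (W.trace * R.trace - (W * R).trace)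
        + R.trace ^ 2 * sigma2 W) := by
  simp only [sigma2, sub_mul, mul_sub, trace_sub, trace_smul, smul_mul_assoc, mul_smul_comm,
    smul_eq_mul, trace_mul_comm R W]
  ring

end Sigma2

theorem stmt2_general (n : ℕ) (W R : Matrix (Fin n) (Fin n) ℝ) (htr : 0 < W.trace) :
    (∀ᶠ t in nhds (0 : ℝ),
        DifferentiableAt ℝ (fun t : ℝ => sigma2 (W + t • R) / (W + t • R).trace) t) ∧
      HasDerivAt (deriv (fun t : ℝ => sigma2 (W + t • R) / (W + t • R).trace))
        (-(((W.trace • R - R.trace • W) * (W.trace • R - R.trace • W)).trace)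
          / (W.trace) ^ 3) 0 := by
  simp only [sigma2_add_smul, trace_add_smul]
  refine ⟨eventually_differentiableAt_quadratic_div_linear htr.ne', ?_⟩
  convert hasDerivAt_deriv_quadratic_div_linear htr.ne' using 1
  rw [trace_mul_self_trace_smul_sub_trace_smul]
  ring

/-- For symmetric `W` with `tr W > 0` and symmetric `R`, the function
`g(t) = σ₂(W + tR)/tr(W + tR)` is twice differentiable at `t = 0` with
`g''(0) = − tr(((tr W)R − (tr R)W)²) / (tr W)³`. -/
theorem stmt2 (n : ℕ) (hn : 0 < n) (W R : Matrix (Fin n) (Fin n) ℝ)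
    (hWsymm : W.IsSymm) (hRsymm : R.IsSymm) (htr : 0 < W.trace) :
    (∀ᶠ t in nhds (0 : ℝ),
        DifferentiableAt ℝ (fun t : ℝ => sigma2 (W + t • R) / (W + t • R).trace) t) ∧
      HasDerivAt (deriv (fun t : ℝ => sigma2 (W + t • R) / (W + t • R).trace))
        (-(((W.trace • R - R.trace • W) * (W.trace • R - R.trace • W)).trace)
          / (W.trace) ^ 3) 0 :=
  stmt2_general n W R htr
end
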